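/- Let (R,B) be a ℤ-based rng of rank 4k (k ∈ ℕ, k ≥ 1) such that the involution ~ is the identity on B, such that there is an element b_1 ∈ B with b_1 = k·e (where e is the identity of R_ℂ), and such that N_{ii}^j = δ_{1,j}·k for all i, j. Then there exists a Hadamard matrix of size 4k × 4k, i.e. a (4k)×(4k) matrix H with entries in {1,−1} satisfying H·Hᵀ = 4k·I. -/

import Mathlib

/-!
The structure constants are totally symmetric. Since `b i₀ = k • 1`, the hypothesis on `τ` says
`N i j i₀ = k * δ i j`, so the `b i₀`-coordinate of `(b i * b j) * b m` is `k * N i j m`; this is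
cyclic in `i, j, m` by associativity and commutativity. Hence the integer matrices `L i` of
multiplication by `b i` are symmetric and pairwise commuting, with `L i * L i = k² • 1` (as
`b i * b i = k • b i₀`) and `tr (L i * L j) = 4k · k² · δ i j`. Diagonalising them simultaneously
gives a basis `v a` with `L i (v a) = k * H i a • v a`, `H i a = ±1`, and computing
`tr (L i * L j)` in this basis turns the trace identity into `H * Hᵀ = 4k • 1`.
-/

open Module LinearMap

theorem LinearMap.IsSymmetric.exists_basis_apply_eq_smul {𝕜 E ι m : Type*} [RCLike 𝕜]
    [NormedAddCommGroup E] [InnerProductSpace 𝕜 E] [FiniteDimensional 𝕜 E] [Fintype m]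
    (hm : finrank 𝕜 E = Fintype.card m) {T : ι → E →ₗ[𝕜] E} (hT : ∀ i, (T i).IsSymmetric)
    (hC : Pairwise (Function.onFun Commute T)) :
    ∃ (v : Basis m 𝕜 E) (μ : m → ι → 𝕜), ∀ a i, T i (v a) = μ a i • v a := by
  classical
  let W : (ι → 𝕜) → Submodule 𝕜 E := fun χ => ⨅ i, Module.End.eigenspace (T i) (χ i)
  have hW : DirectSum.IsInternal W := directSum_isInternal_of_pairwise_commute hT hC
  let v := hW.collectedBasis fun χ => finBasis 𝕜 (W χ)
  have := Module.Finite.finite_basis v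
  have := Fintype.ofFinite (Σ χ, Fin (finrank 𝕜 (W χ)))
  let e := Fintype.equivOfCardEq ((finrank_eq_card_basis v).symm.trans hm)
  refine ⟨v.reindex e, fun a => (e.symm a).1, fun a i => ?_⟩
  have hmem := hW.collectedBasis_mem (fun χ => finBasis 𝕜 (W χ)) (e.symm a)
  rw [Basis.reindex_apply]
  exact Module.End.mem_eigenspace_iff.mp ((Submodule.mem_iInf _).mp hmem i)

theorem Module.End.mul_self_eq_of_apply_eq_smul {K V : Type*} [Field K] [AddCommGroup V]
    [Module K V] {T : Module.End K V} {c μ : K} (hT : T * T = c • 1) {v : V} (hv0 : v ≠ 0)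
    (hv : T v = μ • v) : μ * μ = c := by
  have h : (μ * μ) • v = c • v := by
    rw [← smul_smul, ← hv, ← map_smul, ← hv, ← Module.End.mul_apply, hT]
    rfl
  exact smul_left_injective K hv0 h

theorem LinearMap.trace_mul_eq_sum_of_apply_eq_smul {R M ι m : Type*} [CommRing R]
    [AddCommGroup M] [Module R M] [Fintype m] [DecidableEq m] {T : ι → M →ₗ[R] M}
    {v : Basis m R M} {μ : m → ι → R} (hv : ∀ a i, T i (v a) = μ a i • v a) (i j : ι) :
    trace R M (T i * T j) = ∑ a, μ a i * μ a j := by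
  rw [trace_eq_matrix_trace R v]
  refine Finset.sum_congr rfl fun a _ => ?_
  rw [Matrix.diag_apply, toMatrix_apply, Module.End.mul_apply, hv, map_smul, hv, smul_smul,
    map_smul, v.repr_self, Finsupp.smul_apply, Finsupp.single_eq_same, smul_eq_mul, mul_one,
    mul_comm]

theorem Matrix.toEuclideanLin_mul {𝕜 n : Type*} [RCLike 𝕜] [Fintype n] [DecidableEq n]
    (A B : Matrix n n 𝕜) : toEuclideanLin (A * B) = toEuclideanLin A * toEuclideanLin B := by
  rw [← coe_toEuclideanCLM_eq_toEuclideanLin, map_mul]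
  rfl

theorem Matrix.trace_toEuclideanLin {𝕜 n : Type*} [RCLike 𝕜] [Fintype n] [DecidableEq n]
    (A : Matrix n n 𝕜) : LinearMap.trace 𝕜 _ (toEuclideanLin A) = A.trace := by
  rw [toEuclideanLin_eq_toLin_orthonormal,
    trace_eq_matrix_trace 𝕜 (EuclideanSpace.basisFun n 𝕜).toBasis, toMatrix_toLin]

theorem exists_sign_matrix_mul_transpose_eq_of_sum_mul {ι m : Type*} [Fintype m]
    [DecidableEq ι] {κ : ℝ} (hκ : κ ≠ 0) {μ : m → ι → ℝ} (hμ : ∀ a i, μ a i * μ a i = κ ^ 2)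
    (hsum : ∀ i j, ∑ a, μ a i * μ a j = if i = j then (Fintype.card m : ℝ) * κ ^ 2 else 0) :
    ∃ H : Matrix ι m ℤ, (∀ i a, H i a = 1 ∨ H i a = -1) ∧
      H * H.transpose = (Fintype.card m : ℤ) • 1 := by
  set H : Matrix ι m ℤ := Matrix.of fun i a => if μ a i = κ then 1 else -1
  have hμH : ∀ a i, μ a i = κ * H i a := fun a i => by
    rcases sq_eq_sq_iff_eq_or_eq_neg.mp ((sq (μ a i)).trans (hμ a i)) with h | h <;> simp [H, h]
  refine ⟨H, fun i a => by simp only [H, Matrix.of_apply]; split_ifs <;> simp, ?_⟩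
  ext i j
  have hij := hsum i j
  simp only [hμH, mul_mul_mul_comm, ← Finset.mul_sum, ← sq] at hij
  have : ((H * H.transpose) i j : ℝ) = ((Fintype.card m : ℤ) • (1 : Matrix ι ι ℤ)) i j := by
    refine mul_left_cancel₀ (pow_ne_zero 2 hκ) ?_
    rw [Matrix.mul_apply]
    push_cast
    simp only [Matrix.transpose_apply, Matrix.smul_apply, Matrix.one_apply]
    rw [hij]
    split_ifs <;> simp [mul_comm]
  exact_mod_cast this

theorem Matrix.exists_sign_matrix_mul_transpose_eq_of_commute {ι n : Type*} [Fintype n]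
    [DecidableEq n] [DecidableEq ι] {M : ι → Matrix n n ℤ} (hsymm : ∀ i, (M i).IsSymm)
    (hcomm : ∀ i j, Commute (M i) (M j)) {κ : ℤ} (hκ : κ ≠ 0) (hsq : ∀ i, M i * M i = κ ^ 2 • 1)
    (htr : ∀ i j, (M i * M j).trace = if i = j then Fintype.card n * κ ^ 2 else 0) :
    ∃ H : Matrix ι n ℤ, (∀ i a, H i a = 1 ∨ H i a = -1) ∧
      H * H.transpose = (Fintype.card n : ℤ) • 1 := by
  let φ := (Int.castRingHom ℝ).mapMatrix (m := n)
  let T i := toEuclideanLin (φ (M i))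
  have hT_mul : ∀ i j, T i * T j = toEuclideanLin (φ (M i * M j)) := fun i j => by
    rw [map_mul, toEuclideanLin_mul]
  have hT_symm : ∀ i, (T i).IsSymmetric := fun i =>
    isSymmetric_toEuclideanLin_iff.mpr (isHermitian_iff_isSymm.mpr ((hsymm i).map _))
  have hT_comm : Pairwise (Function.onFun Commute T) := fun i j _ => by
    change T i * T j = T j * T i
    rw [hT_mul, hT_mul, (hcomm i j).eq]
  obtain ⟨v, μ, hv⟩ := LinearMap.IsSymmetric.exists_basis_apply_eq_smul
    (finrank_euclideanSpace (𝕜 := ℝ)) hT_symm hT_comm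
  refine exists_sign_matrix_mul_transpose_eq_of_sum_mul (μ := μ) (Int.cast_ne_zero.mpr hκ)
    (fun a i => ?_) fun i j => ?_
  · refine Module.End.mul_self_eq_of_apply_eq_smul ?_ (v.ne_zero a) (hv a i)
    rw [hT_mul, hsq, map_zsmul, map_one, map_zsmul, ← coe_toEuclideanCLM_eq_toEuclideanLin,
      map_one, ← Int.cast_smul_eq_zsmul ℝ, Int.cast_pow]
    rfl
  · rw [← LinearMap.trace_mul_eq_sum_of_apply_eq_smul hv, hT_mul, trace_toEuclideanLin,
      RingHom.mapMatrix_apply, ← AddMonoidHom.map_trace (Int.castRingHom ℝ), htr]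
    split_ifs <;> simp

section StructureConstants

variable {ι : Type*} {N : ι → ι → ι → ℤ}

/-- As in `Algebra.leftMulMatrix`, entry `(l, m)` is the coefficient of `b l` in `b i * b m`. -/
def mulMatrix (N : ι → ι → ι → ℤ) (i : ι) : Matrix ι ι ℤ := Matrix.of fun l m => N i m l

variable {A : Type*} [CommRing A] [Algebra ℂ A] {b : Basis ι ℂ A}

theorem repr_basis_mul [Fintype ι] (hmul : ∀ i j, b i * b j = ∑ m, (N i j m : ℂ) • b m)
    (i j m : ι) : b.repr (b i * b j) m = N i j m := by
  classical
  simp [hmul, Finsupp.single_apply]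

theorem structConst_comm [Fintype ι] (hmul : ∀ i j, b i * b j = ∑ m, (N i j m : ℂ) • b m)
    (i j m : ι) : N i j m = N j i m := by
  have h : (N i j m : ℂ) = N j i m := by
    rw [← repr_basis_mul hmul, ← repr_basis_mul hmul, mul_comm]
  exact_mod_cast h

theorem mapMatrix_mulMatrix [Fintype ι] [DecidableEq ι]
    (hmul : ∀ i j, b i * b j = ∑ m, (N i j m : ℂ) • b m) (i : ι) :
    (Int.castRingHom ℂ).mapMatrix (mulMatrix N i) = Algebra.leftMulMatrix b (b i) := by
  ext l m
  simp [mulMatrix, Algebra.leftMulMatrix_eq_repr_mul, repr_basis_mul hmul]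

theorem mulMatrix_mul [Fintype ι] [DecidableEq ι]
    (hmul : ∀ i j, b i * b j = ∑ m, (N i j m : ℂ) • b m) (i j : ι) :
    mulMatrix N i * mulMatrix N j = ∑ p, N i j p • mulMatrix N p := by
  apply Matrix.map_injective (f := (Int.cast : ℤ → ℂ)) Int.cast_injective
  change (Int.castRingHom ℂ).mapMatrix _ = (Int.castRingHom ℂ).mapMatrix _
  rw [map_mul, mapMatrix_mulMatrix hmul, mapMatrix_mulMatrix hmul, ← map_mul, hmul, map_sum,
    map_sum]
  refine Finset.sum_congr rfl fun p _ => ?_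
  rw [map_zsmul, mapMatrix_mulMatrix hmul, map_smul, Int.cast_smul_eq_zsmul]

theorem structConst_unit [Fintype ι] [DecidableEq ι] {κ : ℤ} (hκ : κ ≠ 0) {i₀ : ι}
    (hb : b i₀ = (κ : ℂ) • 1)
    (hτ : ∀ i j, (∑ m, (starRingEnd ℂ) (b.repr 1 m) * (N i j m : ℂ)) =
      if i = j then (1 : ℂ) else 0) (i j : ι) :
    N i j i₀ = if i = j then κ else 0 := by
  have hκ' : (κ : ℂ) ≠ 0 := Int.cast_ne_zero.mpr hκ
  have hone : b.repr 1 = Finsupp.single i₀ (κ : ℂ)⁻¹ := by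
    rw [← one_smul ℂ (1 : A), ← inv_mul_cancel₀ hκ', ← smul_smul, ← hb, map_smul, b.repr_self,
      Finsupp.smul_single, smul_eq_mul, mul_one]
  have h := hτ i j
  rw [Fintype.sum_eq_single i₀ fun m hm => by simp [hone, Ne.symm hm]] at h
  simp only [hone, Finsupp.single_eq_same, map_inv₀, map_intCast] at h
  have : (N i j i₀ : ℂ) = ((if i = j then κ else 0 : ℤ) : ℂ) := by
    rw [← mul_right_inj' (inv_ne_zero hκ'), h]
    split_ifs <;> simp [hκ']
  exact_mod_cast this

theorem structConst_cyclic [Fintype ι] [DecidableEq ι]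
    (hassoc : ∀ i j, mulMatrix N i * mulMatrix N j = ∑ p, N i j p • mulMatrix N p)
    {κ : ℤ} (hκ : κ ≠ 0) {i₀ : ι} (hunit : ∀ i j, N i j i₀ = if i = j then κ else 0)
    (i j m : ι) : N i j m = N j m i := by
  have h := congrFun (congrFun (hassoc i j) i₀) m
  simp only [Matrix.mul_apply, Matrix.sum_apply, Matrix.smul_apply, mulMatrix, Matrix.of_apply,
    hunit, smul_eq_mul, ite_mul, zero_mul, mul_ite, mul_zero, Finset.sum_ite_eq,
    Finset.sum_ite_eq', Finset.mem_univ, if_true] at h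
  exact mul_left_cancel₀ hκ (by rw [h, mul_comm])

theorem mulMatrix_isSymm (hcomm : ∀ i j m, N i j m = N j i m)
    (hcyc : ∀ i j m, N i j m = N j m i) (i : ι) : (mulMatrix N i).IsSymm := by
  ext l m
  simp only [Matrix.transpose_apply, mulMatrix, Matrix.of_apply]
  rw [hcyc i l m, hcomm l m i, ← hcyc i m l]

theorem mulMatrix_commute [Fintype ι] (hcomm : ∀ i j m, N i j m = N j i m)
    (hassoc : ∀ i j, mulMatrix N i * mulMatrix N j = ∑ p, N i j p • mulMatrix N p) (i j : ι) :
    Commute (mulMatrix N i) (mulMatrix N j) := by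
  simp only [Commute, SemiconjBy, hassoc, hcomm i j]

theorem mulMatrix_eq_smul_one [DecidableEq ι] (hcyc : ∀ i j m, N i j m = N j m i) {κ : ℤ}
    {i₀ : ι} (hunit : ∀ i j, N i j i₀ = if i = j then κ else 0) : mulMatrix N i₀ = κ • 1 := by
  ext l m
  simp only [mulMatrix, Matrix.of_apply, hcyc i₀ m l, hunit, Matrix.smul_apply, Matrix.one_apply,
    smul_eq_mul, mul_ite, mul_one, mul_zero, eq_comm]

theorem mulMatrix_mul_self [Fintype ι] [DecidableEq ι]
    (hassoc : ∀ i j, mulMatrix N i * mulMatrix N j = ∑ p, N i j p • mulMatrix N p)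
    {κ : ℤ} {i₀ : ι} (hsq : ∀ i m, N i i m = if m = i₀ then κ else 0)
    (h₀ : mulMatrix N i₀ = κ • 1) (i : ι) : mulMatrix N i * mulMatrix N i = κ ^ 2 • 1 := by
  simp only [hassoc, hsq, ite_smul, zero_smul, Finset.sum_ite_eq', Finset.mem_univ, if_true, h₀,
    smul_smul, sq]

theorem trace_mulMatrix [Fintype ι] [DecidableEq ι] (hcyc : ∀ i j m, N i j m = N j m i) {κ : ℤ} {i₀ : ι}
    (hsq : ∀ i m, N i i m = if m = i₀ then κ else 0) (p : ι) :
    (mulMatrix N p).trace = Fintype.card ι * if p = i₀ then κ else 0 := by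
  calc (mulMatrix N p).trace = ∑ l, N l l p := Finset.sum_congr rfl fun l _ => hcyc p l l
    _ = _ := by simp [hsq]

theorem trace_mulMatrix_mul [Fintype ι] [DecidableEq ι]
    (hassoc : ∀ i j, mulMatrix N i * mulMatrix N j = ∑ p, N i j p • mulMatrix N p)
    {κ : ℤ} {i₀ : ι} (hunit : ∀ i j, N i j i₀ = if i = j then κ else 0)
    (htr : ∀ p, (mulMatrix N p).trace = Fintype.card ι * if p = i₀ then κ else 0) (i j : ι) :
    (mulMatrix N i * mulMatrix N j).trace = if i = j then Fintype.card ι * κ ^ 2 else 0 := by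
  simp only [hassoc, Matrix.trace_sum, Matrix.trace_smul, htr, smul_eq_mul, mul_ite, mul_zero,
    Finset.sum_ite_eq', Finset.mem_univ, if_true, hunit]
  split_ifs <;> ring

end StructureConstants

theorem zBasedRng_gives_hadamard_matrix_general
    (k : ℕ) (A : Type*) [CommRing A] [Algebra ℂ A]
    (b : Module.Basis (Fin (4 * k)) ℂ A)
    (N : Fin (4 * k) → Fin (4 * k) → Fin (4 * k) → ℤ)
    (hmul : ∀ i j, b i * b j = ∑ m, (N i j m : ℂ) • b m)
    (hτ : ∀ i j, (∑ m, (starRingEnd ℂ) (b.repr 1 m) * (N i j m : ℂ)) =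
      if i = j then (1 : ℂ) else 0)
    (i₀ : Fin (4 * k)) (hb1 : b i₀ = (k : ℂ) • 1)
    (hNii : ∀ i j, N i i j = if j = i₀ then (k : ℤ) else 0) :
    ∃ H : Matrix (Fin (4 * k)) (Fin (4 * k)) ℤ,
      (∀ i j, H i j = 1 ∨ H i j = -1) ∧
      H * H.transpose = (4 * (k : ℤ)) • 1 := by
  have hk : (k : ℤ) ≠ 0 := by
    have := i₀.pos
    omega
  have hcomm := structConst_comm hmul
  have hassoc := mulMatrix_mul hmul
  have hunit := structConst_unit hk (by rw [hb1, Int.cast_natCast]) hτ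
  have hcyc := structConst_cyclic hassoc hk hunit
  obtain ⟨H, hH, hHH⟩ := Matrix.exists_sign_matrix_mul_transpose_eq_of_commute
    (mulMatrix_isSymm hcomm hcyc) (mulMatrix_commute hcomm hassoc) hk
    (mulMatrix_mul_self hassoc hNii (mulMatrix_eq_smul_one hcyc hunit))
    (trace_mulMatrix_mul hassoc hunit (trace_mulMatrix hcyc hNii))
  exact ⟨H, hH, by simpa using hHH⟩

/-- Let `(R,B)` be a `ℤ`-based rng of rank `4k` (`k ≥ 1`)
whose involution `~` is the identity on `B` (so the `ℤ`-based rng axioms are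
stated with `σ = id`), containing a basis element `b i₀ = k • e` (`e` the
identity of `R_ℂ`), and with `N_{ii}^j = δ_{i₀ j} k` for all `i, j`.  Then
there exists a `4k × 4k` Hadamard matrix. -/
theorem zBasedRng_gives_hadamard_matrix
    (k : ℕ) (hk : 1 ≤ k) (A : Type*) [CommRing A] [Algebra ℂ A]
    (b : Module.Basis (Fin (4 * k)) ℂ A)
    (N : Fin (4 * k) → Fin (4 * k) → Fin (4 * k) → ℤ)
    (hmul : ∀ i j, b i * b j = ∑ m, (N i j m : ℂ) • b m)
    (hτ : ∀ i j, (∑ m, (starRingEnd ℂ) (b.repr 1 m) * (N i j m : ℂ)) =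
      if i = j then (1 : ℂ) else 0)
    (he : ∀ j, (starRingEnd ℂ) (b.repr 1 j) = b.repr 1 j)
    (i₀ : Fin (4 * k)) (hb1 : b i₀ = (k : ℂ) • 1)
    (hNii : ∀ i j, N i i j = if j = i₀ then (k : ℤ) else 0) :
    ∃ H : Matrix (Fin (4 * k)) (Fin (4 * k)) ℤ,
      (∀ i j, H i j = 1 ∨ H i j = -1) ∧
      H * H.transpose = (4 * (k : ℤ)) • 1 :=
  zBasedRng_gives_hadamard_matrix_general k A b N hmul hτ i₀ hb1 hNii
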